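/- There exists a function f : (Fin N → Fin r) → ℝ expressible as a two-hidden-layer threshold network that computes the N-dimensional identity tensor: f(x) = 1 if all coordinates of x are equal, and f(x) = 0 otherwise. Concretely, define f(x) = step((∑_{j : Fin r} step((∑_{i : Fin N} [x i = j]) - (N - 1/2))) - 1/2), where [P] is 1 if P holds and 0 otherwise and step(t) = if t > 0 then 1 else 0. Then f(x) = 1 ↔ ∀ i i', x i = x i'. -/

import Mathlib

open Finset

noncomputable def step (t : ℝ) : ℝ := if 0 < t then 1 else 0

lemma step_natCast_sub (c n : ℕ) : step ((c : ℝ) - (n - 1/2)) = if n ≤ c then 1 else 0 := by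
  have threshold : (0 : ℝ) < c - (n - 1/2) ↔ n ≤ c := by
    constructor
    · intro h
      exact Nat.lt_add_one_iff.mp (by exact_mod_cast (by linarith : (n : ℝ) < c + 1))
    · intro h
      linarith [(Nat.cast_le (α := ℝ)).mpr h]
  simp only [step, threshold]

lemma step_natCast_sub_half (c : ℕ) : step ((c : ℝ) - 1/2) = if 1 ≤ c then 1 else 0 := by
  convert step_natCast_sub c 1 using 2
  norm_num

lemma Finset.card_le_card_filter_iff {α : Type*} (s : Finset α) (p : α → Prop) [DecidablePred p] :
    #s ≤ #(s.filter p) ↔ ∀ x ∈ s, p x := by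
  rw [(card_filter_le s p).ge_iff_eq, card_filter_eq_iff]

lemma step_count_sub_card {ι α : Type*} [Fintype ι] [DecidableEq α] (x : ι → α) (j : α) :
    step ((∑ i, if x i = j then (1 : ℝ) else 0) - (Fintype.card ι - 1/2))
      = if ∀ i, x i = j then 1 else 0 := by
  simp_rw [sum_boole, step_natCast_sub, ← card_univ, card_le_card_filter_iff, mem_univ,
    forall_const]

lemma exists_forall_eq_iff_forall_eq {ι α : Type*} [Nonempty ι] (x : ι → α) :
    (∃ j, ∀ i, x i = j) ↔ ∀ i i', x i = x i' := by
  constructor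
  · rintro ⟨j, hj⟩ i i'
    rw [hj i, hj i']
  · intro h
    obtain ⟨i₀⟩ := ‹Nonempty ι›
    exact ⟨x i₀, fun i => h i i₀⟩

theorem identity_tensor_network_general (N r : ℕ) (hN : 0 < N)
    (x : Fin N → Fin r) :
    step ((∑ j : Fin r, step ((∑ i : Fin N, if x i = j then (1 : ℝ) else 0) - (N - 1/2))) - 1/2) = 1
      ↔ ∀ i i', x i = x i' := by
  have : Nonempty (Fin N) := ⟨⟨0, hN⟩⟩
  have detector (j : Fin r) :
      step ((∑ i : Fin N, if x i = j then (1 : ℝ) else 0) - (N - 1/2))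
        = if ∀ i, x i = j then 1 else 0 := by
    convert step_count_sub_card x j
    rw [Fintype.card_fin]
  simp_rw [detector, sum_boole, step_natCast_sub_half, one_le_card, filter_nonempty_iff]
  simp only [mem_univ, true_and, ite_eq_left_iff, zero_ne_one, imp_false, not_not]
  exact exists_forall_eq_iff_forall_eq x

theorem identity_tensor_network (N r : ℕ) (hN : 0 < N) (hr : 0 < r)
    (x : Fin N → Fin r) :
    step ((∑ j : Fin r, step ((∑ i : Fin N, if x i = j then (1 : ℝ) else 0) - (N - 1/2))) - 1/2) = 1
      ↔ ∀ i i', x i = x i' :=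
  identity_tensor_network_general N r hN x
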